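/- Let σ* be a proper face of Δ* (in the nef-partition setting), with σ_i* = {n ∈ σ* | φ_i(n) = 1} and σ̌ = σ₁* + ⋯ + σ_r* nonempty. Then σ* = Conv(σ₁*, …, σ_r*); that is, every point of σ* lies in the convex hull of the subsets σ_i*. -/

import Mathlib

/-!
Every extreme point `e` of the face `σ*` is an extreme point of `Δ*`, hence lies in `E`, so each
`φᵢ(e)` is `0` or `1`. If all of them vanished, then `⟨m, e⟩ ≥ -∑ φᵢ(e) = 0` on `Δ = ∑ Δᵢ`, so
the whole ray `ℝ≥0 • e` would lie in `Δ*` and `e` could not be extreme (for `e = 0`, because `Δ*`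
contains a neighbourhood of `0`, `Δ` being bounded). Hence every vertex of `σ*` lies in some
`σᵢ*`, and the polytope `σ*` is the convex hull of its finitely many vertices.
-/

open scoped Pointwise

namespace BB

abbrev V (n : ℕ) : Type := Fin n → ℝ

/-- The standard pairing between `M_ℝ` and `N_ℝ` (both identified with `ℝⁿ`). -/
def pair {n : ℕ} (m v : V n) : ℝ := ∑ i, m i * v i

/-- A point of `ℝⁿ` is a lattice point if all its coordinates are integers. -/
def IsLatticePt {n : ℕ} (m : V n) : Prop := ∀ i, ∃ z : ℤ, m i = (z : ℝ)

/-- A lattice polytope: convex hull of finitely many lattice points. -/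
def IsLatticePolytope {n : ℕ} (P : Set (V n)) : Prop :=
  ∃ S : Finset (V n), (∀ m ∈ S, IsLatticePt m) ∧ P = convexHull ℝ (S : Set (V n))

/-- The polar dual `P* = {v | ⟨m,v⟩ ≥ -1 for all m ∈ P}`. -/
def polar {n : ℕ} (P : Set (V n)) : Set (V n) := {v | ∀ m ∈ P, -1 ≤ pair m v}

/-- A reflexive polytope: a lattice polytope with `0` in its interior whose polar
dual is again a lattice polytope. -/
def IsReflexive {n : ℕ} (P : Set (V n)) : Prop :=
  IsLatticePolytope P ∧ (0 : V n) ∈ interior P ∧ IsLatticePolytope (polar P)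

/-- The support function `supp P v = -inf{⟨m,v⟩ | m ∈ P}`; for `P = Δᵢ` and `v ∈ N_ℝ`
this is the piecewise linear function `φᵢ(v)` of the nef-partition. -/
noncomputable def supp {n : ℕ} (P : Set (V n)) (v : V n) : ℝ :=
  sSup ((fun m => -(pair m v)) '' P)

end BB


namespace BB

/-- `F` is a face of the convex set `P` (an exposed subset). -/
def IsFaceOf {n : ℕ} (F P : Set (V n)) : Prop := IsExposed ℝ P F

theorem eq_convexHull_of_extremePoints_subset {E : Type*} [AddCommGroup E] [Module ℝ E]
    [TopologicalSpace E] [T2Space E] [IsTopologicalAddGroup E] [ContinuousSMul ℝ E]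
    [LocallyConvexSpace ℝ E] {K A : Set E} (hK : IsCompact K) (hKconv : Convex ℝ K)
    (hfin : (K.extremePoints ℝ).Finite) (hext : K.extremePoints ℝ ⊆ A) (hAK : A ⊆ K) :
    K = convexHull ℝ A := by
  refine subset_antisymm ?_ (convexHull_min hAK hKconv)
  calc K = closure (convexHull ℝ (K.extremePoints ℝ)) :=
        (closure_convexHull_extremePoints hK hKconv).symm
    _ = convexHull ℝ (K.extremePoints ℝ) := (hfin.isCompact_convexHull ℝ).isClosed.closure_eq
    _ ⊆ convexHull ℝ A := convexHull_mono hext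

section

variable {n : ℕ}

theorem pair_eq_dotProduct (m v : V n) : pair m v = m ⬝ᵥ v := rfl

theorem IsLatticePolytope.isCompact {P : Set (V n)} (hP : IsLatticePolytope P) :
    IsCompact P := by
  obtain ⟨S, -, rfl⟩ := hP
  exact S.finite_toSet.isCompact_convexHull ℝ

theorem IsLatticePolytope.convex {P : Set (V n)} (hP : IsLatticePolytope P) : Convex ℝ P := by
  obtain ⟨S, -, rfl⟩ := hP
  exact convex_convexHull ℝ _

theorem zero_mem_polar (P : Set (V n)) : (0 : V n) ∈ polar P := fun m _ => by
  simp [pair_eq_dotProduct]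

theorem smul_mem_polar_of_pair_nonneg {P : Set (V n)} {e : V n} (he : ∀ m ∈ P, 0 ≤ pair m e)
    {t : ℝ} (ht : 0 ≤ t) : t • e ∈ polar P := fun m hm => by
  rw [pair_eq_dotProduct, dotProduct_smul, smul_eq_mul, ← pair_eq_dotProduct]
  linarith [mul_nonneg ht (he m hm)]

theorem neg_pair_le_supp {P : Set (V n)} (hP : IsCompact P) {m : V n} (hm : m ∈ P) (v : V n) :
    -pair m v ≤ supp P v := by
  have hcont : Continuous fun m : V n => -pair m v := by
    simp only [pair_eq_dotProduct, dotProduct]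
    fun_prop
  exact le_csSup (hP.image hcont).bddAbove ⟨m, hm, rfl⟩

theorem neg_pair_le_sum_supp {ι : Type*} [Fintype ι] {D : ι → Set (V n)}
    (hD : ∀ i, IsCompact (D i)) {m : V n} (hm : m ∈ ∑ i, D i) (v : V n) :
    -pair m v ≤ ∑ i, supp (D i) v := by
  obtain ⟨g, hg, rfl⟩ := (Set.mem_fintype_sum D m).1 hm
  rw [pair_eq_dotProduct, sum_dotProduct, ← Finset.sum_neg_distrib]
  exact Finset.sum_le_sum fun i _ => neg_pair_le_supp (hD i) (hg i) v

theorem exists_ne_zero_forall_abs_pair_le_one {P : Set (V n)} (hP : Bornology.IsBounded P)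
    (hn : 0 < n) : ∃ w ≠ 0, ∀ m ∈ P, |pair m w| ≤ 1 := by
  obtain ⟨R, hR⟩ := hP.exists_norm_le
  set C := max R 1
  have hC : 0 < C := lt_of_lt_of_le one_pos (le_max_right _ _)
  let i : Fin n := ⟨0, hn⟩
  refine ⟨Pi.single i C⁻¹, by simpa using hC.ne', fun m hm => ?_⟩
  rw [pair_eq_dotProduct, dotProduct_single, abs_mul, abs_inv, abs_of_pos hC,
    ← div_eq_mul_inv, div_le_one hC, ← Real.norm_eq_abs]
  exact (norm_le_pi_norm m i).trans ((hR m hm).trans (le_max_left _ _))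

theorem zero_notMem_extremePoints_polar {P : Set (V n)} (hP : Bornology.IsBounded P)
    (hn : 0 < n) : (0 : V n) ∉ (polar P).extremePoints ℝ := fun hext => by
  obtain ⟨w, hw, hwP⟩ := exists_ne_zero_forall_abs_pair_le_one hP hn
  have hw_mem : w ∈ polar P := fun m hm => (abs_le.1 (hwP m hm)).1
  have hnegw_mem : -w ∈ polar P := fun m hm => by
    rw [pair_eq_dotProduct, dotProduct_neg, ← pair_eq_dotProduct]
    linarith [(abs_le.1 (hwP m hm)).2]
  refine hw (hext.2 hw_mem hnegw_mem ⟨1 / 2, 1 / 2, by norm_num, by norm_num, by norm_num, ?_⟩)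
  rw [smul_neg, add_neg_cancel]

theorem notMem_extremePoints_polar_of_pair_nonneg {P : Set (V n)} {e : V n}
    (he : ∀ m ∈ P, 0 ≤ pair m e) (hne : e ≠ 0) : e ∉ (polar P).extremePoints ℝ := fun hext => by
  refine hne (hext.2 (zero_mem_polar P) (smul_mem_polar_of_pair_nonneg he zero_le_two)
    ⟨1 / 2, 1 / 2, by norm_num, by norm_num, by norm_num, ?_⟩).symm
  rw [smul_zero, zero_add, smul_smul]
  norm_num

theorem exists_pair_neg_of_mem_extremePoints_polar {P : Set (V n)} (hP : Bornology.IsBounded P)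
    (hn : 0 < n) {e : V n} (he : e ∈ (polar P).extremePoints ℝ) : ∃ m ∈ P, pair m e < 0 := by
  by_contra! hnonneg
  rcases eq_or_ne e 0 with rfl | hne
  · exact zero_notMem_extremePoints_polar hP hn he
  · exact notMem_extremePoints_polar_of_pair_nonneg hnonneg hne he

theorem exists_supp_eq_one_of_mem_extremePoints_polar {ι : Type*} [Fintype ι]
    {D : ι → Set (V n)} (hD : ∀ i, IsCompact (D i)) (hbdd : Bornology.IsBounded (∑ i, D i))
    (hn : 0 < n) {e : V n} (he : e ∈ (polar (∑ i, D i)).extremePoints ℝ)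
    (h01 : ∀ i, supp (D i) e = 0 ∨ supp (D i) e = 1) : ∃ i, supp (D i) e = 1 := by
  by_contra! hne
  obtain ⟨m, hm, hneg⟩ := exists_pair_neg_of_mem_extremePoints_polar hbdd hn he
  have hle := neg_pair_le_sum_supp hD hm e
  simp only [fun i => (h01 i).resolve_right (hne i), Finset.sum_const_zero] at hle
  linarith

end

theorem stmt2_general {n r : ℕ} (Δ : Set (V n)) (D : Fin r → Set (V n))
    (hΔrefl : IsReflexive Δ)
    (hDlat : ∀ i, IsLatticePolytope (D i))
    (hΔ : Δ = ∑ i, D i)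
    (E : Finset (V n))
    (hE : (E : Set (V n)) = Set.extremePoints ℝ (polar Δ))
    (hnef : ∀ i, ∀ e ∈ E, supp (D i) e = 0 ∨ supp (D i) e = 1)
    -- a proper face σ* of Δ*
    (σs : Set (V n))
    (hface : IsFaceOf σs (polar Δ))
    (hproper : σs ≠ polar Δ) :
    σs = convexHull ℝ (⋃ i, {v ∈ σs | supp (D i) v = 1}) := by
  obtain ⟨hΔlat, -, hpolar⟩ := hΔrefl
  have hσcomp : IsCompact σs := hpolar.isCompact.of_isClosed_subset
    (hface.isClosed hpolar.isCompact.isClosed) hface.subset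
  have hext_polar : σs.extremePoints ℝ ⊆ (polar Δ).extremePoints ℝ :=
    hface.isExtreme.extremePoints_subset_extremePoints
  have hext_E : σs.extremePoints ℝ ⊆ E := hE ▸ hext_polar
  refine eq_convexHull_of_extremePoints_subset hσcomp (hface.convex hpolar.convex)
    (E.finite_toSet.subset hext_E) (fun e he => ?_) (Set.iUnion_subset fun i => Set.sep_subset _ _)
  rcases Nat.eq_zero_or_pos n with rfl | hn
  · exact absurd (hface.subset.antisymm fun y _ => Subsingleton.elim y e ▸ he.1) hproper
  subst hΔ
  obtain ⟨i, hi⟩ := exists_supp_eq_one_of_mem_extremePoints_polar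
    (fun i => (hDlat i).isCompact) hΔlat.isCompact.isBounded hn (hext_polar he)
    (fun i => hnef i e (hext_E he))
  exact Set.mem_iUnion.2 ⟨i, he.1, hi⟩

theorem stmt2 {n r : ℕ} (Δ : Set (V n)) (D : Fin r → Set (V n))
    (hΔrefl : IsReflexive Δ)
    (hDlat : ∀ i, IsLatticePolytope (D i))
    (hΔ : Δ = ∑ i, D i)
    (E : Finset (V n))
    (hE : (E : Set (V n)) = Set.extremePoints ℝ (polar Δ))
    (hnef : ∀ i, ∀ e ∈ E, supp (D i) e = 0 ∨ supp (D i) e = 1)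
    (Nb : Fin r → Set (V n))
    (hNb : ∀ i, Nb i = convexHull ℝ ({0} ∪ {e : V n | e ∈ E ∧ supp (D i) e = 1}))
    -- a proper face σ* of Δ*
    (σs : Set (V n))
    (hface : IsFaceOf σs (polar Δ))
    (hproper : σs ≠ polar Δ)
    -- σ̌ = σ₁* + ⋯ + σ_r* is nonempty
    (hchk : (∑ i, {v ∈ σs | supp (D i) v = 1}).Nonempty) :
    σs = convexHull ℝ (⋃ i, {v ∈ σs | supp (D i) v = 1}) :=
  stmt2_general Δ D hΔrefl hDlat hΔ E hE hnef σs hface hproper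

end BB
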